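/- Let g_j be a sequence of measurable functions on ℝ^n and let c_j > 0 satisfy ∑_{j=1}^∞ c_j = 1. Then the weak L^1 quasinorm satisfies ‖∑_{j=1}^∞ g_j‖_{L^{1,∞}} ≤ ∑_{j=1}^∞ c_j^{-1} ‖g_j‖_{L^{1,∞}}. -/
import Mathlib


open MeasureTheory ENNReal

/-- The weak `L¹` quasinorm on `ℝⁿ`. -/
noncomputable def wnorm1 {n : ℕ} (g : EuclideanSpace ℝ (Fin n) → ℝ) : ℝ≥0∞ :=
  ⨆ t : NNReal, (t : ℝ≥0∞) * volume {x : EuclideanSpace ℝ (Fin n) | (t : ℝ) < |g x|}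

/-- if `c j > 0`, `∑ c j = 1`, and `∑ g j` converges pointwise a.e., then
`‖∑ g j‖_{1,∞} ≤ ∑ (c j)⁻¹ ‖g j‖_{1,∞}`. -/
theorem wnorm1_tsum_le {n : ℕ} (g : ℕ → EuclideanSpace ℝ (Fin n) → ℝ)
    (hg : ∀ j, Measurable (g j))
    (c : ℕ → ℝ) (hc : ∀ j, 0 < c j) (hc1 : HasSum c 1)
    (hconv : ∀ᵐ x ∂(volume : Measure (EuclideanSpace ℝ (Fin n))),
      Summable (fun j => g j x)) :
    wnorm1 (fun x => ∑' j, g j x) ≤ ∑' j, ENNReal.ofReal (c j)⁻¹ * wnorm1 (g j) := by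
  rw [wnorm1]
  apply iSup_le
  intro t
  set B : ℕ → Set (EuclideanSpace ℝ (Fin n)) :=
    fun j => {x | c j * (t : ℝ) < |g j x|} with hB
  have hsub : {x : EuclideanSpace ℝ (Fin n) | (t : ℝ) < |∑' j, g j x|} ⊆
      (⋃ j, B j) ∪ {x | ¬ Summable (fun j => g j x)} := by
    intro x hx
    by_cases hs : Summable (fun j => g j x)
    · left
      by_contra hall
      simp only [Set.mem_iUnion, hB, Set.mem_setOf_eq, not_exists, not_lt] at hall
      have h1 : |∑' j, g j x| ≤ ∑' j, |g j x| := by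
        simpa using norm_tsum_le_tsum_norm (f := fun j => g j x) (by simpa using hs.abs)
      have h2 : ∑' j, |g j x| ≤ ∑' j, c j * (t : ℝ) :=
        Summable.tsum_le_tsum hall hs.abs (hc1.summable.mul_right _)
      have h3 : ∑' j, c j * (t : ℝ) = (t : ℝ) := by
        rw [(hc1.mul_right (t : ℝ)).tsum_eq, one_mul]
      have := hx
      simp only [Set.mem_setOf_eq] at this
      linarith
    · right; exact hs
  have hnull : volume {x : EuclideanSpace ℝ (Fin n) | ¬ Summable (fun j => g j x)} = 0 := by
    rw [ae_iff] at hconv; simpa using hconv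
  calc (t : ℝ≥0∞) * volume {x : EuclideanSpace ℝ (Fin n) | (t : ℝ) < |∑' j, g j x|}
      ≤ (t : ℝ≥0∞) * volume ((⋃ j, B j) ∪ {x | ¬ Summable (fun j => g j x)}) := by
        exact mul_le_mul_right (measure_mono hsub) _
    _ ≤ (t : ℝ≥0∞) * (volume (⋃ j, B j) + volume {x | ¬ Summable (fun j => g j x)}) := by
        gcongr
        exact measure_union_le _ _
    _ = (t : ℝ≥0∞) * volume (⋃ j, B j) := by rw [hnull, add_zero]
    _ ≤ (t : ℝ≥0∞) * ∑' j, volume (B j) := by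
        gcongr
        exact measure_iUnion_le _
    _ = ∑' j, (t : ℝ≥0∞) * volume (B j) := ENNReal.tsum_mul_left.symm
    _ ≤ ∑' j, ENNReal.ofReal (c j)⁻¹ * wnorm1 (g j) := by
        apply ENNReal.tsum_le_tsum
        intro j
        have hct : (0 : ℝ) ≤ c j * (t : ℝ) := mul_nonneg (hc j).le t.coe_nonneg
        have hle : ENNReal.ofReal (c j * (t : ℝ)) * volume (B j) ≤ wnorm1 (g j) := by
          rw [wnorm1]
          refine le_trans (le_of_eq ?_) (le_iSup _ (Real.toNNReal (c j * (t : ℝ))))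
          rw [ENNReal.ofReal]
          congr 2
          simp [hB, Real.coe_toNNReal _ hct]
        calc (t : ℝ≥0∞) * volume (B j)
            = ENNReal.ofReal (c j)⁻¹ * (ENNReal.ofReal (c j * (t : ℝ)) * volume (B j)) := by
              rw [← mul_assoc, ← ENNReal.ofReal_mul (inv_nonneg.mpr (hc j).le)]
              have : (c j)⁻¹ * (c j * (t : ℝ)) = (t : ℝ) :=
                inv_mul_cancel_left₀ (hc j).ne' _
              rw [this, ENNReal.ofReal_coe_nnreal]
          _ ≤ ENNReal.ofReal (c j)⁻¹ * wnorm1 (g j) := by gcongr
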